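/- arXiv:1912.07114 — 7 statements merged into one kernel-verified Lean document; each statement's English description precedes it below -/
import Mathlib

section
/- Let p and q be distinct primes and let f : Z_{pq} → ℕ be a multiset on the cyclic group Z_{pq} such that ∑_{x} f(x) ζ^x = 0, where ζ is a primitive pq-th root of unity. Then f is a nonnegative integer combination of indicator functions of cosets of the subgroup of order p and cosets of the subgroup of order q. In particular, ∑_x f(x) = kp + ℓq for some nonnegative integers k, ℓ. -/
/-!
Over `ℚ`, the vanishing sums form the kernel of `g ↦ ∑ₓ g x ζ ^ x` on `ℚ^(ℤ/pq)`; since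
`[ℚ(ζ) : ℚ] = φ(pq) = (p - 1)(q - 1)`, this kernel has dimension `p + q - 1`. Every function
`x ↦ u (x mod p) + v (x mod q)` lies in it, because `ζ`-weighted sums over cosets vanish, and by the
Chinese remainder theorem these functions already form a space of dimension `p + q - 1`. Hence
`f x = u (x mod p) + v (x mod q)` with rational `u, v`; as `f` is `ℕ`-valued, `u` and `v` can be
shifted to be `ℕ`-valued, and `u (x mod p)` is then a sum of indicators of cosets of `⟨p⟩`.
-/

open Finset Module

theorem exists_nat_eq_add_of_cast_eq_add {A B R : Type*} [Fintype A] [Nonempty A] [Nonempty B]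
    [AddCommGroupWithOne R] [CharZero R] {f : A → B → ℕ} {u : A → R} {v : B → R}
    (h : ∀ a b, (f a b : R) = u a + v b) :
    ∃ (U : A → ℕ) (V : B → ℕ), ∀ a b, f a b = U a + V b := by
  obtain ⟨b₀⟩ := ‹Nonempty B›
  obtain ⟨a₀, -, ha₀⟩ := exists_min_image univ (f · b₀) univ_nonempty
  refine ⟨fun a => f a b₀ - f a₀ b₀, fun b => f a₀ b, fun a b => ?_⟩
  apply Nat.cast_injective (R := R)
  push_cast [ha₀ a (mem_univ a)]
  rw [h, h, h, h]
  abel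

namespace ZMod

theorem pow_val_add_of_pow_eq_one {M : Type*} [Monoid M] {N : ℕ} [NeZero N] {ζ : M}
    (hζ : ζ ^ N = 1) (x y : ZMod N) : ζ ^ (x + y).val = ζ ^ x.val * ζ ^ y.val := by
  rw [val_add, ← pow_eq_pow_mod _ hζ, pow_add]

theorem sum_mul_pow_val_eq_zero_of_periodic {R : Type*} [CommRing R] [IsDomain R] {N : ℕ}
    [NeZero N] {ζ : R} (hζ : ζ ^ N = 1) {u : ZMod N → R} {t : ZMod N}
    (hu : Function.Periodic u t) (ht : ζ ^ t.val ≠ 1) :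
    ∑ x, u x * ζ ^ x.val = 0 := by
  set S := ∑ x, u x * ζ ^ x.val
  have hshift : S = ζ ^ t.val * S := by
    calc S = ∑ x, u (x + t) * ζ ^ (x + t).val :=
          (Equiv.sum_comp (Equiv.addRight t) fun x => u x * ζ ^ x.val).symm
      _ = ζ ^ t.val * S := by
          simp only [hu _, pow_val_add_of_pow_eq_one hζ, S, mul_sum]
          exact sum_congr rfl fun x _ => by ring
  have : (1 - ζ ^ t.val) * S = 0 := by rw [sub_mul, one_mul, ← hshift, sub_self]
  exact (mul_eq_zero.mp this).resolve_left (sub_ne_zero.mpr ht.symm)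

section ChineseRemainder

variable {m n : ℕ}

@[simp]
theorem chineseRemainder_fst (h : m.Coprime n) (x : ZMod (m * n)) :
    (chineseRemainder h x).1 = castHom (dvd_mul_right m n) (ZMod m) x := by
  simp [chineseRemainder, castHom_apply, Prod.fst_zmod_cast]

@[simp]
theorem chineseRemainder_snd (h : m.Coprime n) (x : ZMod (m * n)) :
    (chineseRemainder h x).2 = castHom (dvd_mul_left n m) (ZMod n) x := by
  simp [chineseRemainder, castHom_apply, Prod.snd_zmod_cast]

theorem castHom_chineseRemainder_symm_fst (h : m.Coprime n) (ab : ZMod m × ZMod n) :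
    castHom (dvd_mul_right m n) (ZMod m) ((chineseRemainder h).symm ab) = ab.1 := by
  rw [← chineseRemainder_fst h, RingEquiv.apply_symm_apply]

theorem castHom_chineseRemainder_symm_snd (h : m.Coprime n) (ab : ZMod m × ZMod n) :
    castHom (dvd_mul_left n m) (ZMod n) ((chineseRemainder h).symm ab) = ab.2 := by
  rw [← chineseRemainder_snd h, RingEquiv.apply_symm_apply]

theorem sum_castHom_add_castHom {M : Type*} [AddCommMonoid M] [NeZero m] [NeZero n]
    (h : m.Coprime n) (U : ZMod m → M) (V : ZMod n → M) :
    ∑ x : ZMod (m * n),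
        (U (castHom (dvd_mul_right m n) (ZMod m) x) + V (castHom (dvd_mul_left n m) (ZMod n) x)) =
      n • ∑ a, U a + m • ∑ b, V b := by
  rw [Fintype.sum_equiv (chineseRemainder h).toEquiv _ (fun ab => U ab.1 + V ab.2)
    (fun x => by simp), Fintype.sum_prod_type]
  simp [sum_add_distrib, smul_sum]

end ChineseRemainder

noncomputable def castSum (F : Type*) [Field F] (m n : ℕ) :
    (ZMod m → F) × (ZMod n → F) →ₗ[F] (ZMod (m * n) → F) :=
  (LinearMap.funLeft F F (castHom (dvd_mul_right m n) (ZMod m))).coprod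
    (LinearMap.funLeft F F (castHom (dvd_mul_left n m) (ZMod n)))

section CastSum

variable {F : Type*} [Field F]

theorem castSum_apply {m n : ℕ} (u : ZMod m → F) (v : ZMod n → F) (x : ZMod (m * n)) :
    castSum F m n (u, v) x =
      u (castHom (dvd_mul_right m n) (ZMod m) x) + v (castHom (dvd_mul_left n m) (ZMod n) x) :=
  rfl

theorem ker_castSum_le_span {m n : ℕ} (h : m.Coprime n) :
    LinearMap.ker (castSum F m n) ≤ F ∙ (1, -1) := by
  rintro ⟨u, v⟩ huv
  have hsum : ∀ a b, u a + v b = 0 := fun a b => by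
    have := congrFun huv ((chineseRemainder h).symm (a, b))
    rwa [castSum_apply, castHom_chineseRemainder_symm_fst, castHom_chineseRemainder_symm_snd]
      at this
  refine Submodule.mem_span_singleton.mpr ⟨u 0, ?_⟩
  ext a
  · simp only [Prod.smul_mk, Pi.smul_apply, Pi.one_apply, smul_eq_mul, mul_one]
    linear_combination hsum 0 0 - hsum a 0
  · simp only [Prod.smul_mk, Pi.smul_apply, Pi.neg_apply, Pi.one_apply, smul_eq_mul, mul_neg,
      mul_one]
    linear_combination -hsum 0 a

theorem le_finrank_range_castSum {m n : ℕ} [NeZero m] [NeZero n] (h : m.Coprime n) :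
    m + n - 1 ≤ finrank F (LinearMap.range (castSum F m n)) := by
  have hker : finrank F (LinearMap.ker (castSum F m n)) ≤ 1 :=
    (Submodule.finrank_mono (ker_castSum_le_span h)).trans
      ((finrank_span_le_card _).trans (by simp))
  have := LinearMap.finrank_range_add_finrank_ker (castSum F m n)
  rw [finrank_prod, finrank_pi, finrank_pi, ZMod.card, ZMod.card] at this
  omega

theorem exists_nat_castSum_eq [CharZero F] {m n : ℕ} [NeZero m] [NeZero n] (h : m.Coprime n)
    {f : ZMod (m * n) → ℕ} {u : ZMod m → F} {v : ZMod n → F}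
    (huv : castSum F m n (u, v) = fun x => (f x : F)) :
    ∃ (U : ZMod m → ℕ) (V : ZMod n → ℕ), ∀ x,
      f x = U (castHom (dvd_mul_right m n) (ZMod m) x) +
        V (castHom (dvd_mul_left n m) (ZMod n) x) := by
  set e := chineseRemainder h
  obtain ⟨U, V, hUV⟩ := exists_nat_eq_add_of_cast_eq_add (f := fun a b => f (e.symm (a, b)))
    (u := u) (v := v) fun a b => by
      rw [← congrFun huv, castSum_apply, castHom_chineseRemainder_symm_fst,
        castHom_chineseRemainder_symm_snd]
  refine ⟨U, V, fun x => ?_⟩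
  rw [← hUV, ← chineseRemainder_fst h, ← chineseRemainder_snd h, Prod.mk.eta, e.symm_apply_apply]

end CastSum

section RootSum

variable {K : Type*} [Field K] [CharZero K]

noncomputable def rootSum (N : ℕ) [NeZero N] (ζ : K) : (ZMod N → ℚ) →ₗ[ℚ] K :=
  Fintype.linearCombination ℚ fun x : ZMod N => ζ ^ x.val

theorem rootSum_apply {N : ℕ} [NeZero N] (ζ : K) (g : ZMod N → ℚ) :
    rootSum N ζ g = ∑ x, (g x : K) * ζ ^ x.val := by
  simp only [rootSum, Fintype.linearCombination_apply, Rat.smul_def]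

theorem range_rootSum {N : ℕ} [NeZero N] {ζ : K} (hζ : ζ ^ N = 1) :
    LinearMap.range (rootSum N ζ) = Subalgebra.toSubmodule (Algebra.adjoin ℚ {ζ}) := by
  rw [rootSum, Fintype.range_linearCombination, Algebra.adjoin_eq_span]
  congr 1
  ext y
  simp only [Set.mem_range, SetLike.mem_coe, Submonoid.mem_closure_singleton]
  constructor
  · rintro ⟨x, rfl⟩
    exact ⟨x.val, rfl⟩
  · rintro ⟨k, rfl⟩
    exact ⟨k, by rw [val_natCast, ← pow_eq_pow_mod _ hζ]⟩

theorem finrank_ker_rootSum {N : ℕ} [NeZero N] {ζ : K} (hζ : IsPrimitiveRoot ζ N) :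
    finrank ℚ (LinearMap.ker (rootSum N ζ)) = N - N.totient := by
  have hint : IsIntegral ℚ ζ := (hζ.isIntegral (NeZero.pos N)).tower_top
  have hrange : finrank ℚ (LinearMap.range (rootSum N ζ)) = N.totient := by
    rw [range_rootSum hζ.pow_eq_one, Subalgebra.finrank_toSubmodule,
      (Algebra.adjoin.powerBasis hint).finrank, Algebra.adjoin.powerBasis_dim,
      ← Polynomial.cyclotomic_eq_minpoly_rat hζ (NeZero.pos N), Polynomial.natDegree_cyclotomic]
  have := LinearMap.finrank_range_add_finrank_ker (rootSum N ζ)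
  rw [hrange, finrank_pi, ZMod.card] at this
  omega

theorem rootSum_comp_castHom_eq_zero {N r : ℕ} [NeZero N] {ζ : K} (hζ : IsPrimitiveRoot ζ N)
    (hr : r ∣ N) (hrN : r < N) (u : ZMod r → ℚ) :
    rootSum N ζ (u ∘ castHom hr (ZMod r)) = 0 := by
  have hr0 : r ≠ 0 := by rintro rfl; exact NeZero.ne N (zero_dvd_iff.mp hr)
  rw [rootSum_apply]
  refine sum_mul_pow_val_eq_zero_of_periodic hζ.pow_eq_one (t := r) (fun x => ?_) ?_
  · simp only [Function.comp_apply, map_add, map_natCast, natCast_self, add_zero]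
  · rw [val_natCast, Nat.mod_eq_of_lt hrN]
    exact hζ.pow_ne_one_of_pos_of_lt hr0 hrN

theorem range_castSum_le_ker_rootSum {m n : ℕ} [NeZero (m * n)] (hm : 1 < m) (hn : 1 < n)
    {ζ : K} (hζ : IsPrimitiveRoot ζ (m * n)) :
    LinearMap.range (castSum ℚ m n) ≤ LinearMap.ker (rootSum (m * n) ζ) := by
  rintro _ ⟨⟨u, v⟩, rfl⟩
  have hsplit : castSum ℚ m n (u, v) =
      u ∘ castHom (dvd_mul_right m n) (ZMod m) + v ∘ castHom (dvd_mul_left n m) (ZMod n) := rfl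
  rw [LinearMap.mem_ker, hsplit, map_add,
    rootSum_comp_castHom_eq_zero hζ _ (lt_mul_right (by omega) hn),
    rootSum_comp_castHom_eq_zero hζ _ (lt_mul_left (by omega) hm), add_zero]

theorem ker_rootSum_eq_range_castSum {p q : ℕ} [NeZero (p * q)] (hp : p.Prime) (hq : q.Prime)
    (hpq : p ≠ q) {ζ : K} (hζ : IsPrimitiveRoot ζ (p * q)) :
    LinearMap.ker (rootSum (p * q) ζ) = LinearMap.range (castSum ℚ p q) := by
  have : NeZero p := ⟨hp.ne_zero⟩
  have : NeZero q := ⟨hq.ne_zero⟩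
  have hcop : p.Coprime q := (Nat.coprime_primes hp hq).mpr hpq
  refine (Submodule.eq_of_le_of_finrank_le
    (range_castSum_le_ker_rootSum hp.one_lt hq.one_lt hζ) ?_).symm
  rw [finrank_ker_rootSum hζ, Nat.totient_mul hcop, Nat.totient_prime hp, Nat.totient_prime hq]
  refine le_trans (le_of_eq ?_) (le_finrank_range_castSum hcop)
  obtain ⟨a, rfl⟩ := Nat.exists_eq_add_one_of_ne_zero hp.ne_zero
  obtain ⟨b, rfl⟩ := Nat.exists_eq_add_one_of_ne_zero hq.ne_zero
  simp only [Nat.add_sub_cancel]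
  ring_nf
  omega

end RootSum

theorem mem_zmultiples_natCast_iff {N r : ℕ} [NeZero N] (hr : r ∣ N) (x : ZMod N) :
    x ∈ AddSubgroup.zmultiples (r : ZMod N) ↔ castHom hr (ZMod r) x = 0 := by
  constructor
  · rintro ⟨k, rfl⟩
    rw [map_zsmul, map_natCast, natCast_self, smul_zero]
  · intro hx
    rw [castHom_apply, ← natCast_val, natCast_eq_zero_iff] at hx
    obtain ⟨k, hk⟩ := hx
    refine ⟨k, ?_⟩
    change (k : ℤ) • (r : ZMod N) = x
    rw [natCast_zsmul, nsmul_eq_mul, ← Nat.cast_mul, mul_comm, ← hk, natCast_zmod_val]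

theorem exists_sum_mul_ite_mem_zmultiples_eq {N r : ℕ} [NeZero N] (hr : r ∣ N)
    (V : ZMod r → ℕ) : ∃ c : ZMod N → ℕ, ∀ y, ∑ x, c x *
      (if y - x ∈ AddSubgroup.zmultiples (r : ZMod N) then 1 else 0) =
        V (castHom hr (ZMod r) y) := by
  set π := castHom hr (ZMod r)
  obtain ⟨s, hs⟩ : ∃ s : ZMod r → ZMod N, ∀ a, π (s a) = a :=
    ⟨_, Function.rightInverse_surjInv (castHom_surjective hr)⟩
  have hmem : ∀ x y, y - x ∈ AddSubgroup.zmultiples (r : ZMod N) ↔ π y = π x := fun x y => by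
    rw [mem_zmultiples_natCast_iff hr, map_sub, sub_eq_zero]
  refine ⟨fun x => if s (π x) = x then V (π x) else 0, fun y => ?_⟩
  simp only [hmem]
  rw [sum_eq_single (s (π y))]
  · simp only [hs, ↓reduceIte, mul_one]
  · intro x _ hx
    split_ifs with h1 h2
    · exact absurd (h1.symm.trans (congrArg s h2.symm)) hx
    all_goals simp
  · simp

end ZMod

open scoped Classical in
theorem lam_leung_two_primes (p q : ℕ) [Fact p.Prime] [Fact q.Prime] (hpq : p ≠ q)
    (f : ZMod (p * q) → ℕ)
    (h : ∑ x : ZMod (p * q),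
        (f x : ℂ) * Complex.exp (2 * Real.pi * Complex.I / (p * q)) ^ x.val = 0) :
    (∃ cp cq : ZMod (p * q) → ℕ, ∀ y : ZMod (p * q), f y =
      (∑ x : ZMod (p * q),
        cp x * (if y - x ∈ AddSubgroup.zmultiples ((q : ZMod (p * q))) then 1 else 0)) +
      (∑ x : ZMod (p * q),
        cq x * (if y - x ∈ AddSubgroup.zmultiples ((p : ZMod (p * q))) then 1 else 0))) ∧
    ∃ k l : ℕ, ∑ x : ZMod (p * q), f x = k * p + l * q := by
  have hp : p.Prime := Fact.out
  have hq : q.Prime := Fact.out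
  have hcop : p.Coprime q := (Nat.coprime_primes hp hq).mpr hpq
  set ζ : ℂ := Complex.exp (2 * Real.pi * Complex.I / (p * q))
  have hζ : IsPrimitiveRoot ζ (p * q) := by
    simpa using Complex.isPrimitiveRoot_exp (p * q) (Nat.mul_pos hp.pos hq.pos).ne'
  have hf : (fun x => (f x : ℚ)) ∈ LinearMap.ker (ZMod.rootSum (p * q) ζ) := by
    simpa [LinearMap.mem_ker, ZMod.rootSum_apply] using h
  rw [ZMod.ker_rootSum_eq_range_castSum hp hq hpq hζ] at hf
  obtain ⟨⟨u, v⟩, huv⟩ := hf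
  obtain ⟨U, V, hUV⟩ := ZMod.exists_nat_castSum_eq hcop huv
  obtain ⟨cp, hcp⟩ := ZMod.exists_sum_mul_ite_mem_zmultiples_eq (dvd_mul_left q p) V
  obtain ⟨cq, hcq⟩ := ZMod.exists_sum_mul_ite_mem_zmultiples_eq (dvd_mul_right p q) U
  refine ⟨⟨cp, cq, fun y => by rw [hcp, hcq, hUV, add_comm]⟩, ∑ b, V b, ∑ a, U a, ?_⟩
  simp only [hUV, ZMod.sum_castHom_add_castHom hcop, smul_eq_mul]
  ring
end

section
/- Let G be a finite abelian group which is the internal direct sum of subgroups B and P, and let A ⊆ G satisfy A ⊕ B = G (i.e., every element of G is uniquely a sum a + b with a ∈ A, b ∈ B). Then A is a spectral set with spectrum P: the characters indexed by elements of P form an orthogonal basis of the space of complex functions on A. -/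
/-!
Both `A` and `P` are complements of `B`, so `|A| = [G : B] = |P|`. A character `φ` trivial on `B`
is constant on the cosets `a + B`, which `A` enumerates, so `∑_G φ = |B| ∑_A φ`; for
`φ = χ ψ̄ ≠ 1` the left side vanishes.
-/

namespace AddSubgroup

variable {G : Type*} [AddCommGroup G]

lemma isComplement'_of_isCompl {H K : AddSubgroup G} (h : IsCompl H K) : IsComplement' H K := by
  refine ⟨add_injective_of_disjoint h.disjoint, fun g ↦ ?_⟩
  obtain ⟨x, hx, y, hy, rfl⟩ := mem_sup.mp (h.sup_eq_top ▸ mem_top g)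
  exact ⟨(⟨x, hx⟩, ⟨y, hy⟩), rfl⟩

lemma IsComplement.sum_eq_card_smul_sum [Fintype G] {M : Type*} [AddCommMonoid M]
    {A : Finset G} {B : AddSubgroup G} (h : IsComplement (A : Set G) (B : Set G)) (f : G → M)
    (hf : ∀ g, ∀ b ∈ B, f (g + b) = f g) :
    ∑ g, f g = Nat.card B • ∑ a ∈ A, f a := by
  classical
  calc ∑ g, f g = ∑ x : A × B, f (x.1 + x.2) :=
        (Fintype.sum_bijective _ h _ _ fun _ ↦ rfl).symm
    _ = ∑ x : A × B, f x.1 := Fintype.sum_congr _ _ fun x ↦ hf _ _ x.2.2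
    _ = Nat.card B • ∑ a ∈ A, f a := by
        simp only [Fintype.sum_prod_type_right, Finset.sum_const, Finset.card_univ]
        rw [Nat.card_eq_fintype_card, Finset.sum_coe_sort A f]

end AddSubgroup

namespace AddChar

variable {G R : Type*} [AddCommGroup G] [Fintype G] [CommRing R] [IsDomain R] [CharZero R]

lemma sum_eq_zero_of_isComplement {A : Finset G} {B : AddSubgroup G}
    (h : AddSubgroup.IsComplement (A : Set G) (B : Set G)) {φ : AddChar G R}
    (hφB : ∀ b ∈ B, φ b = 1) (hφ : φ ≠ 0) : ∑ a ∈ A, φ a = 0 := by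
  have hG : ∑ g, φ g = Nat.card B • ∑ a ∈ A, φ a :=
    h.sum_eq_card_smul_sum φ fun g b hb ↦ by rw [map_add_eq_mul, hφB b hb, mul_one]
  rw [sum_eq_zero_iff_ne_zero.mpr hφ, nsmul_eq_mul, eq_comm, mul_eq_zero] at hG
  exact hG.resolve_left (Nat.cast_ne_zero.mpr Nat.card_pos.ne')

end AddChar

theorem tiling_by_subgroup_complement_is_spectrum_general (G : Type*) [AddCommGroup G] [Fintype G]
    (B P : AddSubgroup G) (hBP : IsCompl B P)
    (A : Finset G)
    (htile : ∀ g : G, ∃! ab : A × B, (ab.1 : G) + (ab.2 : G) = g) :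
    A.card = Nat.card P ∧
    ∀ χ ψ : AddChar G ℂ, (∀ b ∈ B, χ b = 1) → (∀ b ∈ B, ψ b = 1) → χ ≠ ψ →
      ∑ a ∈ A, χ a * (starRingEnd ℂ) (ψ a) = 0 := by
  have hAB : AddSubgroup.IsComplement (A : Set G) (B : Set G) :=
    AddSubgroup.isComplement_iff_existsUnique.mpr htile
  refine ⟨?_, fun χ ψ hχ hψ hχψ ↦ ?_⟩
  · calc A.card = Nat.card (A : Set G) := (Nat.card_eq_finsetCard A).symm
      _ = B.index := hAB.card_left
      _ = Nat.card P := (AddSubgroup.isComplement'_of_isCompl hBP.symm).card_left.symm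
  · have hconj : ∀ a, (χ * ψ⁻¹) a = χ a * (starRingEnd ℂ) (ψ a) := fun a ↦ by
      rw [AddChar.mul_apply, AddChar.inv_apply, AddChar.map_neg_eq_conj]
    simp_rw [← hconj]
    refine AddChar.sum_eq_zero_of_isComplement hAB (fun b hb ↦ ?_) ?_
    · rw [hconj, hχ b hb, hψ b hb, map_one, mul_one]
    · rwa [← AddChar.one_eq_zero, Ne, mul_inv_eq_one]

theorem tiling_by_subgroup_complement_is_spectrum (G : Type*) [AddCommGroup G] [Fintype G]
    [DecidableEq G] (B P : AddSubgroup G) (hBP : IsCompl B P)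
    (A : Finset G)
    (htile : ∀ g : G, ∃! ab : A × B, (ab.1 : G) + (ab.2 : G) = g) :
    A.card = Nat.card P ∧
    ∀ χ ψ : AddChar G ℂ, (∀ b ∈ B, χ b = 1) → (∀ b ∈ B, ψ b = 1) → χ ≠ ψ →
      ∑ a ∈ A, χ a * (starRingEnd ℂ) (ψ a) = 0 :=
  tiling_by_subgroup_complement_is_spectrum_general G B P hBP A htile
end

section
/- Let G = Z_p^2 × Z_q with p, q distinct primes, and suppose A ⊕ B = G with |A| = q and |B| = p^2. Then the subgroup Z_p^2 × {0} is a spectrum for B and the subgroup {0} × Z_q is a spectrum for A; in particular both A and B are spectral sets. -/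
/-!
Every character `χ_l` of `G` is multiplicative, so the tiling `A ⊕ B = G` gives
`(∑_{a ∈ A} χ_l a) (∑_{b ∈ B} χ_l b) = ∑_{g ∈ G} χ_l g = 0` for `l ≠ 0`. Orthogonality of `χ_l`
and `χ_{l'}` on a set `S` is the vanishing of `∑_S χ_{l - l'}`. For `l, l' ∈ ℤ_p² × {0}` the
character `χ_{l - l'}` has order `p`, and a vanishing sum of `|A| = q` many `p`-th roots of unity
would force `p ∣ q`; hence the sum over `B` vanishes. Symmetrically, for `l, l' ∈ {0} × ℤ_q` the
sum over `B` cannot vanish since `q ∤ p²`, so the sum over `A` does.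
-/

open Complex Finset

noncomputable def chiZp2 (p : ℕ) (a u : ZMod p × ZMod p) : ℂ :=
  Complex.exp (2 * Real.pi * Complex.I * (((u.1 * a.1 + u.2 * a.2 : ZMod p).val : ℂ) / p))

noncomputable def chiG (p q : ℕ) (l x : (ZMod p × ZMod p) × ZMod q) : ℂ :=
  chiZp2 p l.1 x.1 *
    Complex.exp (2 * Real.pi * Complex.I * (((x.2 * l.2 : ZMod q).val : ℂ) / q))

def IsSpectrum (p q : ℕ) [NeZero p] [NeZero q]
    (S Λ : Finset ((ZMod p × ZMod p) × ZMod q)) : Prop :=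
  Λ.card = S.card ∧ ∀ l ∈ Λ, ∀ l' ∈ Λ, l ≠ l' →
    ∑ x ∈ S, chiG p q l x * (starRingEnd ℂ) (chiG p q l' x) = 0

def IsSpectral (p q : ℕ) [NeZero p] [NeZero q]
    (S : Finset ((ZMod p × ZMod p) × ZMod q)) : Prop :=
  ∃ Λ, IsSpectrum p q S Λ

def Tiles (p q : ℕ) [NeZero p] [NeZero q]
    (S : Finset ((ZMod p × ZMod p) × ZMod q)) : Prop :=
  ∃ T : Finset ((ZMod p × ZMod p) × ZMod q),
    S.card * T.card = Fintype.card ((ZMod p × ZMod p) × ZMod q) ∧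
    ∀ g, ∃ s ∈ S, ∃ t ∈ T, s + t = g

open ComplexConjugate

/-- The cyclotomic polynomial `Φ_p`, being the minimal polynomial of `ζ`, divides
`∑_{x ∈ S} X ^ e x`; evaluating at `1` gives `p ∣ #S`. -/
theorem IsPrimitiveRoot.prime_dvd_card_of_sum_pow_eq_zero {K α : Type*} [Field K] [CharZero K]
    {p : ℕ} [hp : Fact p.Prime] {ζ : K} (hζ : IsPrimitiveRoot ζ p) (S : Finset α) (e : α → ℕ)
    (h : ∑ x ∈ S, ζ ^ e x = 0) : p ∣ #S := by
  set P : Polynomial ℤ := ∑ x ∈ S, Polynomial.X ^ e x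
  have hP : Polynomial.aeval ζ P = 0 := by simpa [P] using h
  obtain ⟨Q, hQ⟩ : Polynomial.cyclotomic p ℤ ∣ P := by
    rw [Polynomial.cyclotomic_eq_minpoly hζ hp.out.pos]
    exact minpoly.isIntegrallyClosed_dvd (hζ.isIntegral hp.out.pos) hP
  have h1 := congrArg (Polynomial.eval 1) hQ
  rw [Polynomial.eval_mul, Polynomial.eval_one_cyclotomic_prime] at h1
  simp only [P, Polynomial.eval_finsetSum, Polynomial.eval_pow, Polynomial.eval_X, one_pow,
    sum_const, nsmul_eq_mul, mul_one] at h1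
  exact_mod_cast Dvd.intro _ h1.symm

namespace ZMod

theorem isPrimitiveRoot_stdAddChar_one (N : ℕ) [NeZero N] :
    IsPrimitiveRoot (stdAddChar (1 : ZMod N)) N := by
  have h := stdAddChar_coe (N := N) 1
  rw [Int.cast_one, Int.cast_one, mul_one] at h
  rw [h]
  exact Complex.isPrimitiveRoot_exp N (NeZero.ne N)

theorem stdAddChar_eq_pow_val {N : ℕ} [NeZero N] (j : ZMod N) :
    stdAddChar j = stdAddChar (1 : ZMod N) ^ j.val := by
  rw [← AddChar.map_nsmul_eq_pow, nsmul_one, natCast_zmod_val]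

theorem prime_dvd_card_of_sum_stdAddChar_eq_zero {α : Type*} {p : ℕ} [Fact p.Prime]
    (S : Finset α) (f : α → ZMod p) (h : ∑ x ∈ S, stdAddChar (f x) = 0) : p ∣ #S := by
  refine (isPrimitiveRoot_stdAddChar_one p).prime_dvd_card_of_sum_pow_eq_zero S
    (fun x ↦ (f x).val) ?_
  rw [← h]
  exact sum_congr rfl fun x _ ↦ (stdAddChar_eq_pow_val (f x)).symm

theorem sum_stdAddChar_mul_eq_zero {N : ℕ} [NeZero N] {t : ZMod N} (ht : t ≠ 0) :
    ∑ u : ZMod N, stdAddChar (u * t) = 0 := by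
  simp_rw [mul_comm _ t]
  exact AddChar.sum_eq_zero_of_ne_one (isPrimitive_stdAddChar N ht)

end ZMod

theorem Fintype.sum_mul_sum_mul_sum {α β γ R : Type*} [Fintype α] [Fintype β] [Fintype γ]
    [CommSemiring R] (f : α → R) (g : β → R) (h : γ → R) :
    ∑ x : (α × β) × γ, f x.1.1 * g x.1.2 * h x.2 = (∑ a, f a) * (∑ b, g b) * ∑ c, h c := by
  simp only [Fintype.sum_prod_type, ← sum_mul, ← mul_sum]

theorem sum_sum_add_eq_sum_univ_of_tiling {G M : Type*} [Add G] [Fintype G] [AddCommMonoid M]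
    {A B : Finset G} (htile : ∀ g : G, ∃! ab : A × B, (ab.1 : G) + ab.2 = g) (f : G → M) :
    ∑ a ∈ A, ∑ b ∈ B, f (a + b) = ∑ g, f g := by
  rw [← sum_coe_sort A]
  simp_rw [← sum_coe_sort B]
  rw [← Fintype.sum_prod_type']
  exact Fintype.sum_bijective _ ((Function.bijective_iff_existsUnique _).mpr htile) _ _
    fun _ ↦ rfl

theorem card_filter_snd_eq {α β : Type*} [Fintype α] [Fintype β] [DecidableEq β] (b : β) :
    #(univ.filter fun x : α × β ↦ x.2 = b) = Fintype.card α := by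
  rw [show univ.filter (fun x : α × β ↦ x.2 = b) = univ ×ˢ {b} by ext ⟨x, y⟩; simp [eq_comm]]
  simp

theorem card_filter_fst_eq {α β : Type*} [Fintype α] [Fintype β] [DecidableEq α] (a : α) :
    #(univ.filter fun x : α × β ↦ x.1 = a) = Fintype.card β := by
  rw [show univ.filter (fun x : α × β ↦ x.1 = a) = {a} ×ˢ univ by ext ⟨x, y⟩; simp [eq_comm]]
  simp

section Characters

variable {p q : ℕ}

local notation "G" => (ZMod p × ZMod p) × ZMod q

section

variable [NeZero p] [NeZero q]

theorem chiG_eq_stdAddChar (l x : G) :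
    chiG p q l x =
      ZMod.stdAddChar (x.1.1 * l.1.1 + x.1.2 * l.1.2) * ZMod.stdAddChar (x.2 * l.2) := by
  simp only [chiG, chiZp2, ZMod.stdAddChar_apply, ZMod.toCircle_apply, mul_div_assoc]

theorem chiG_add_left (l m x : G) : chiG p q (l + m) x = chiG p q l x * chiG p q m x := by
  simp only [chiG_eq_stdAddChar, Prod.fst_add, Prod.snd_add, mul_add, AddChar.map_add_eq_mul]
  ring

theorem chiG_add_right (l x y : G) : chiG p q l (x + y) = chiG p q l x * chiG p q l y := by
  simp only [chiG_eq_stdAddChar, Prod.fst_add, Prod.snd_add, add_mul, AddChar.map_add_eq_mul]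
  ring

theorem conj_chiG (l x : G) : conj (chiG p q l x) = chiG p q (-l) x := by
  simp only [chiG_eq_stdAddChar, map_mul, ← AddChar.map_neg_eq_conj, Prod.fst_neg, Prod.snd_neg,
    mul_neg, neg_add]

theorem chiG_mul_conj_chiG (l l' x : G) :
    chiG p q l x * conj (chiG p q l' x) = chiG p q (l - l') x := by
  rw [conj_chiG, ← chiG_add_left, sub_eq_add_neg]

theorem isSpectrum_iff {S Λ : Finset G} :
    IsSpectrum p q S Λ ↔
      #Λ = #S ∧ ∀ l ∈ Λ, ∀ l' ∈ Λ, l ≠ l' → ∑ x ∈ S, chiG p q (l - l') x = 0 := by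
  simp only [IsSpectrum, chiG_mul_conj_chiG]

theorem sum_chiG_eq_zero {l : G} (hl : l ≠ 0) : ∑ g, chiG p q l g = 0 := by
  obtain ⟨⟨l₁, l₂⟩, l₃⟩ := l
  calc ∑ g, chiG p q ((l₁, l₂), l₃) g
      = (∑ u, ZMod.stdAddChar (u * l₁)) * (∑ u, ZMod.stdAddChar (u * l₂)) *
          ∑ v, ZMod.stdAddChar (v * l₃) := by
        rw [← Fintype.sum_mul_sum_mul_sum]
        simp only [chiG_eq_stdAddChar, AddChar.map_add_eq_mul]
    _ = 0 := by
        by_cases h₁ : l₁ = 0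
        · by_cases h₂ : l₂ = 0
          · have h₃ : l₃ ≠ 0 := by rintro rfl; simp_all
            simp [ZMod.sum_stdAddChar_mul_eq_zero h₃]
          · simp [ZMod.sum_stdAddChar_mul_eq_zero h₂]
        · simp [ZMod.sum_stdAddChar_mul_eq_zero h₁]

theorem sum_chiG_mul_sum_chiG_eq_zero_of_tiling {A B : Finset G}
    (htile : ∀ g : G, ∃! ab : A × B, (ab.1 : G) + ab.2 = g) {l : G} (hl : l ≠ 0) :
    (∑ x ∈ A, chiG p q l x) * ∑ x ∈ B, chiG p q l x = 0 := by
  rw [sum_mul_sum]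
  simp only [← chiG_add_right]
  rw [sum_sum_add_eq_sum_univ_of_tiling htile, sum_chiG_eq_zero hl]

end

theorem sum_chiG_ne_zero_of_snd_eq_zero [Fact p.Prime] [NeZero q] {S : Finset G}
    (hS : ¬ p ∣ #S) {l : G} (hl : l.2 = 0) : ∑ x ∈ S, chiG p q l x ≠ 0 := by
  refine fun h ↦ hS (ZMod.prime_dvd_card_of_sum_stdAddChar_eq_zero S
    (fun x ↦ x.1.1 * l.1.1 + x.1.2 * l.1.2) ?_)
  simpa [chiG_eq_stdAddChar, hl] using h

theorem sum_chiG_ne_zero_of_fst_eq_zero [NeZero p] [Fact q.Prime] {S : Finset G}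
    (hS : ¬ q ∣ #S) {l : G} (hl : l.1 = 0) : ∑ x ∈ S, chiG p q l x ≠ 0 := by
  refine fun h ↦ hS (ZMod.prime_dvd_card_of_sum_stdAddChar_eq_zero S (fun x ↦ x.2 * l.2) ?_)
  simpa [chiG_eq_stdAddChar, hl] using h

end Characters

theorem case_q_p2_spectra (p q : ℕ) [Fact p.Prime] [Fact q.Prime] (hpq : p ≠ q)
    (A B : Finset ((ZMod p × ZMod p) × ZMod q))
    (htile : ∀ g : (ZMod p × ZMod p) × ZMod q,
      ∃! ab : A × B, ((ab.1 : (ZMod p × ZMod p) × ZMod q) + (ab.2 : (ZMod p × ZMod p) × ZMod q)) = g)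
    (hA : A.card = q) (hB : B.card = p ^ 2) :
    IsSpectrum p q B (Finset.univ.filter fun l : (ZMod p × ZMod p) × ZMod q => l.2 = 0) ∧
    IsSpectrum p q A (Finset.univ.filter fun l : (ZMod p × ZMod p) × ZMod q => l.1 = 0) := by
  have hp : p.Prime := Fact.out
  have hq : q.Prime := Fact.out
  have hpA : ¬ p ∣ #A := by rwa [hA, Nat.prime_dvd_prime_iff_eq hp hq]
  have hqB : ¬ q ∣ #B := fun h ↦
    hpq ((Nat.prime_dvd_prime_iff_eq hq hp).mp (hq.dvd_of_dvd_pow (hB ▸ h))).symm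
  refine ⟨isSpectrum_iff.mpr ⟨?_, fun l hl l' hl' hne ↦ ?_⟩,
    isSpectrum_iff.mpr ⟨?_, fun l hl l' hl' hne ↦ ?_⟩⟩
  · rw [card_filter_snd_eq, Fintype.card_prod, ZMod.card, hB, sq]
  · simp only [mem_filter, mem_univ, true_and] at hl hl'
    refine (mul_eq_zero.mp (sum_chiG_mul_sum_chiG_eq_zero_of_tiling htile
      (sub_ne_zero.mpr hne))).resolve_left ?_
    exact sum_chiG_ne_zero_of_snd_eq_zero hpA (by simp [hl, hl'])
  · rw [card_filter_fst_eq, ZMod.card, hA]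
  · simp only [mem_filter, mem_univ, true_and] at hl hl'
    refine (mul_eq_zero.mp (sum_chiG_mul_sum_chiG_eq_zero_of_tiling htile
      (sub_ne_zero.mpr hne))).resolve_right ?_
    exact sum_chiG_ne_zero_of_fst_eq_zero hqB (by simp [hl, hl'])
end

section
/- Let G = Z_p^2 × Z_q with p, q distinct primes and (S, Λ) a spectral pair with gcd(|G|,|S|) = pq and |S| = pq. If some Z_p^2-coset of G contains at least p+1 elements of S, then p^2 divides |S|, a contradiction; hence each Z_p^2-coset contains exactly p elements of S, there is a nonzero a ∈ Z_p^2 such that no nonzero multiple of (a,0) lies in S − S, and S tiles G with tiling complement the cyclic subgroup generated by (a,0). -/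
open Complex Finset

/-!
If a fibre of `Prod.snd` held more than `p` points of `S`, pigeonhole on the determinant
`det (s.1, a)` would put a nonzero multiple of every `(a, 0)` into `S - S`. Column orthogonality
of the square character table of `(S, Λ)` then makes the order-`p` character sum over `Λ`
vanish at some `c • a`, and the Galois conjugation `ζ ↦ ζ ^ c⁻¹` moves this to `a` itself.
Fourier inversion on `ZMod p × ZMod p` then gives `p ^ 2 ∣ #Λ = p * q`, which is absurd. So every
fibre has exactly `p` points and some direction `a` is missing from `S - S`; then
`(s, c) ↦ s + (c • a, 0)` is an injection `S × ZMod p → G` between sets of equal size.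
-/

open Polynomial ZMod
open scoped Matrix

lemma IsPrimitiveRoot.aeval_eq_zero_of_aeval_eq_zero {K : Type*} [Field K] [CharZero K]
    {n : ℕ} (hn : 0 < n) {ζ ω : K} (hζ : IsPrimitiveRoot ζ n) (hω : IsPrimitiveRoot ω n)
    {f : ℚ[X]} (hf : aeval ζ f = 0) : aeval ω f = 0 := by
  rwa [← minpoly.dvd_iff, ← cyclotomic_eq_minpoly_rat hω hn, cyclotomic_eq_minpoly_rat hζ hn,
    minpoly.dvd_iff]

namespace ZMod

variable {n : ℕ} [NeZero n]

lemma stdAddChar_pow_val (x y : ZMod n) : stdAddChar x ^ y.val = stdAddChar (y * x) := by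
  rw [← AddChar.map_nsmul_eq_pow, nsmul_eq_mul, natCast_zmod_val]

lemma isPrimitiveRoot_stdAddChar {c : ZMod n} (hc : IsUnit c) :
    IsPrimitiveRoot (stdAddChar c) n := by
  have h1 : IsPrimitiveRoot (stdAddChar (1 : ZMod n)) n := by
    have h := stdAddChar_coe (N := n) 1
    rw [Int.cast_one, Int.cast_one, mul_one] at h
    exact h ▸ Complex.isPrimitiveRoot_exp n (NeZero.ne n)
  simpa [stdAddChar_pow_val] using h1.pow_of_coprime c.val (val_coe_unit_coprime hc.unit)

lemma stdAddChar_neg_eq_conj (x : ZMod n) : stdAddChar (-x) = starRingEnd ℂ (stdAddChar x) := by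
  rw [AddChar.starComp_apply (by simp [ringChar_zmod_n, NeZero.pos]), AddChar.inv_apply]

/-- The polynomial `∑ X ^ (g t).val` vanishes at the primitive root `stdAddChar 1`, hence at
its Galois conjugate `stdAddChar c`. -/
lemma sum_stdAddChar_mul_eq_zero_s14 {ι : Type*} (T : Finset ι) (g : ι → ZMod n)
    (h : ∑ t ∈ T, stdAddChar (g t) = 0) {c : ZMod n} (hc : IsUnit c) :
    ∑ t ∈ T, stdAddChar (g t * c) = 0 := by
  have haeval (x : ZMod n) :
      aeval (stdAddChar x) (∑ t ∈ T, X ^ (g t).val : ℚ[X]) = ∑ t ∈ T, stdAddChar (g t * x) := by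
    simp [stdAddChar_pow_val]
  rw [← haeval]
  refine IsPrimitiveRoot.aeval_eq_zero_of_aeval_eq_zero (NeZero.pos n)
    (isPrimitiveRoot_stdAddChar isUnit_one) (isPrimitiveRoot_stdAddChar hc) ?_
  simpa [haeval] using h

end ZMod

section Characters

variable {p : ℕ} [NeZero p]

lemma chiZp2_apply (a u : ZMod p × ZMod p) :
    chiZp2 p a u = stdAddChar (u.1 * a.1 + u.2 * a.2) := by
  rw [chiZp2, stdAddChar_apply, toCircle_apply, mul_div_assoc]

lemma chiZp2_comm (a u : ZMod p × ZMod p) : chiZp2 p a u = chiZp2 p u a := by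
  simp only [chiZp2_apply, mul_comm]

lemma chiZp2_smul (a u : ZMod p × ZMod p) (c : ZMod p) :
    chiZp2 p a (c • u) = stdAddChar ((u.1 * a.1 + u.2 * a.2) * c) := by
  rw [chiZp2_apply]
  congr 1
  simp only [Prod.smul_fst, Prod.smul_snd, smul_eq_mul]
  ring

lemma sum_chiZp2_eq_ite (a : ZMod p × ZMod p) :
    ∑ u, chiZp2 p a u = if a = 0 then (p : ℂ) ^ 2 else 0 := by
  classical
  simp only [chiZp2_apply, Fintype.sum_prod_type, AddChar.map_add_eq_mul, ← Finset.sum_mul_sum,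
    AddChar.sum_mulShift _ (isPrimitive_stdAddChar p), ZMod.card, Prod.ext_iff, Prod.fst_zero,
    Prod.snd_zero]
  split_ifs <;> simp_all [sq]

lemma sum_sum_chiZp2 {ι : Type*} (T : Finset ι) (v : ι → ZMod p × ZMod p) :
    ∑ u, ∑ t ∈ T, chiZp2 p (v t) u = (p : ℂ) ^ 2 * #{t ∈ T | v t = 0} := by
  rw [Finset.sum_comm]
  simp only [sum_chiZp2_eq_ite, Finset.sum_ite, Finset.sum_const_zero, add_zero,
    Finset.sum_const, nsmul_eq_mul, mul_comm]

lemma sq_dvd_card_of_sum_chiZp2_eq_zero {ι : Type*} (T : Finset ι) (v : ι → ZMod p × ZMod p)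
    (h : ∀ u ≠ 0, ∑ t ∈ T, chiZp2 p (v t) u = 0) : p ^ 2 ∣ #T := by
  have hsum : ∑ u, ∑ t ∈ T, chiZp2 p (v t) u = #T := by
    rw [Finset.sum_eq_single 0 (fun u _ hu => h u hu) (by simp)]
    simp [chiZp2_comm _ 0, chiZp2_apply]
  rw [sum_sum_chiZp2] at hsum
  exact ⟨_, by exact_mod_cast hsum.symm⟩

end Characters

lemma chiG_apply {p q : ℕ} [NeZero q] (l x : (ZMod p × ZMod p) × ZMod q) :
    chiG p q l x = chiZp2 p l.1 x.1 * stdAddChar (x.2 * l.2) := by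
  rw [chiG, stdAddChar_apply, toCircle_apply, mul_div_assoc]

lemma chiG_mk_zero {p q : ℕ} [NeZero q] (l : (ZMod p × ZMod p) × ZMod q) (u : ZMod p × ZMod p) :
    chiG p q l (u, 0) = chiZp2 p l.1 u := by
  rw [chiG_apply, zero_mul, AddChar.map_zero_eq_one, mul_one]

lemma Matrix.conjTranspose_mul_self_eq_smul_one {m n 𝕜 : Type*} [Fintype m] [Fintype n]
    [DecidableEq m] [DecidableEq n] [Field 𝕜] [StarRing 𝕜] {A : Matrix m n 𝕜} {c : 𝕜}
    (hc : c ≠ 0) (hmn : Fintype.card m = Fintype.card n) (h : A * Aᴴ = c • 1) :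
    Aᴴ * A = c • 1 := by
  have hinv : A * (c⁻¹ • Aᴴ) = 1 := by
    rw [Matrix.mul_smul, h, smul_smul, inv_mul_cancel₀ hc, one_smul]
  rw [← smul_inv_smul₀ hc (Aᴴ * A), ← Matrix.smul_mul,
    (Matrix.mul_eq_one_comm_of_card_eq _ _ _ hmn).1 hinv]

section Spectrum

variable {p q : ℕ} [NeZero p] [NeZero q] {S Λ : Finset ((ZMod p × ZMod p) × ZMod q)}

lemma chiG_mul_conj (l x y : (ZMod p × ZMod p) × ZMod q) :
    chiG p q l x * starRingEnd ℂ (chiG p q l y) = chiG p q l (x - y) := by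
  simp only [chiG_apply, chiZp2_apply, map_mul, ← stdAddChar_neg_eq_conj]
  rw [mul_mul_mul_comm, ← AddChar.map_add_eq_mul, ← AddChar.map_add_eq_mul]
  congr 2 <;> simp only [Prod.fst_sub, Prod.snd_sub] <;> ring

/-- The character table of a spectral pair is square with orthogonal rows of equal length,
so its columns are orthogonal too. -/
lemma IsSpectrum.sum_chiG_sub_eq_zero (hpair : IsSpectrum p q S Λ)
    {x y : (ZMod p × ZMod p) × ZMod q} (hx : x ∈ S) (hy : y ∈ S) (hxy : x ≠ y) :
    ∑ l ∈ Λ, chiG p q l (x - y) = 0 := by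
  classical
  let A : Matrix Λ S ℂ := Matrix.of fun l s => chiG p q l s
  have hrows : A * Aᴴ = (#S : ℂ) • 1 := by
    ext l l'
    simp only [A, Matrix.mul_apply, Matrix.conjTranspose_apply, Matrix.of_apply, Complex.star_def,
      Matrix.smul_apply, Matrix.one_apply, smul_eq_mul]
    rw [Finset.sum_coe_sort S fun s => chiG p q l s * starRingEnd ℂ (chiG p q l' s)]
    split_ifs with hll'
    · simp only [hll', chiG_mul_conj, sub_self]
      simp [chiG_apply, chiZp2_apply]
    · rw [mul_zero, hpair.2 l l.2 l' l'.2 (Subtype.coe_ne_coe.2 hll')]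
  have hcols := congrFun (congrFun (Matrix.conjTranspose_mul_self_eq_smul_one
    (Nat.cast_ne_zero.2 (Finset.card_ne_zero_of_mem hx)) (by simp [hpair.1]) hrows) ⟨y, hy⟩) ⟨x, hx⟩
  simp only [A, Matrix.mul_apply, Matrix.conjTranspose_apply, Matrix.of_apply, Complex.star_def,
    Matrix.smul_apply, Matrix.one_apply, smul_eq_mul] at hcols
  rw [if_neg (by simpa using hxy.symm), mul_zero,
    Finset.sum_coe_sort Λ fun l => starRingEnd ℂ (chiG p q l y) * chiG p q l x] at hcols
  simpa only [mul_comm, chiG_mul_conj] using hcols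

end Spectrum

def HasAllDirections (p q : ℕ) (S : Finset ((ZMod p × ZMod p) × ZMod q)) : Prop :=
  ∀ a : ZMod p × ZMod p, a ≠ 0 → ∃ s ∈ S, ∃ s' ∈ S, s ≠ s' ∧
    ∃ c : ZMod p, c ≠ 0 ∧ s - s' = ((c • a, 0) : (ZMod p × ZMod p) × ZMod q)

lemma sum_chiZp2_eq_zero_of_smul {p : ℕ} [Fact p.Prime] {ι : Type*} (T : Finset ι)
    (v : ι → ZMod p × ZMod p) {u : ZMod p × ZMod p} {c : ZMod p} (hc : c ≠ 0)
    (h : ∑ t ∈ T, chiZp2 p (v t) (c • u) = 0) : ∑ t ∈ T, chiZp2 p (v t) u = 0 := by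
  simp only [chiZp2_smul] at h
  simpa [chiZp2_apply, mul_assoc, mul_inv_cancel₀ hc] using
    sum_stdAddChar_mul_eq_zero_s14 T _ h (inv_ne_zero hc).isUnit

lemma IsSpectrum.sq_dvd_card {p q : ℕ} [Fact p.Prime] [NeZero q]
    {S Λ : Finset ((ZMod p × ZMod p) × ZMod q)} (hpair : IsSpectrum p q S Λ)
    (hS : HasAllDirections p q S) : p ^ 2 ∣ #S := by
  rw [← hpair.1]
  refine sq_dvd_card_of_sum_chiZp2_eq_zero Λ Prod.fst fun a ha => ?_
  obtain ⟨s, hs, s', hs', hne, c, hc, hdiff⟩ := hS a ha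
  have h := hpair.sum_chiG_sub_eq_zero hs hs' hne
  simp only [hdiff, chiG_mk_zero] at h
  exact sum_chiZp2_eq_zero_of_smul Λ Prod.fst hc h

lemma exists_smul_eq_of_mul_eq_mul {K : Type*} [Field K] {a u : K × K} (ha : a ≠ 0)
    (h : u.1 * a.2 = u.2 * a.1) : ∃ c : K, c • a = u := by
  by_cases ha₁ : a.1 = 0
  · have ha₂ : a.2 ≠ 0 := fun ha₂ => ha (Prod.ext ha₁ ha₂)
    have hu₁ : u.1 = 0 := by simpa [ha₁, ha₂] using h
    exact ⟨u.2 / a.2, Prod.ext (by simp [ha₁, hu₁]) (by simp [ha₂])⟩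
  · refine ⟨u.1 / a.1, Prod.ext (by simp [ha₁]) ?_⟩
    simp only [Prod.smul_snd, smul_eq_mul]
    field_simp
    linear_combination h

lemma hasAllDirections_of_lt_card_filter {p q : ℕ} [Fact p.Prime]
    {S : Finset ((ZMod p × ZMod p) × ZMod q)} {v : ZMod q} (hv : p < #{s ∈ S | s.2 = v}) :
    HasAllDirections p q S := by
  intro a ha
  obtain ⟨s, hs, s', hs', hne, hdet⟩ := Finset.exists_ne_map_eq_of_card_lt_of_maps_to
    (t := Finset.univ) (by simpa using hv)
    (f := fun s : (ZMod p × ZMod p) × ZMod q => s.1.1 * a.2 - s.1.2 * a.1)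
    fun _ _ => Finset.mem_coe.2 (Finset.mem_univ _)
  rw [Finset.mem_filter] at hs hs'
  obtain ⟨c, hc⟩ := exists_smul_eq_of_mul_eq_mul ha (u := s.1 - s'.1) (by
    simp only [Prod.fst_sub, Prod.snd_sub]
    linear_combination hdet)
  have hsnd : s.2 = s'.2 := hs.2.trans hs'.2.symm
  have hsub : s - s' = ((c • a, 0) : (ZMod p × ZMod p) × ZMod q) := by
    rw [hc]
    exact Prod.ext rfl (sub_eq_zero.2 hsnd)
  refine ⟨s, hs.1, s', hs'.1, hne, c, fun hc0 => hne ?_, hsub⟩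
  rwa [hc0, zero_smul, ← Prod.zero_eq_mk, sub_eq_zero] at hsub

lemma Finset.card_filter_eq_of_card_filter_le {α β : Type*} [Fintype β] [DecidableEq β]
    (s : Finset α) (f : α → β) {k : ℕ} (hle : ∀ b, #{x ∈ s | f x = b} ≤ k)
    (hcard : #s = Fintype.card β * k) (b : β) : #{x ∈ s | f x = b} = k := by
  have hsum : ∑ b, #{x ∈ s | f x = b} = ∑ _b : β, k := by
    rw [← Finset.card_eq_sum_card_fiberwise (fun x _ => Finset.mem_coe.2 (Finset.mem_univ (f x))),
      hcard, Finset.sum_const, Finset.card_univ, smul_eq_mul]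
  exact (Finset.sum_eq_sum_iff_of_le fun b _ => hle b).1 hsum b (Finset.mem_univ b)

lemma exists_add_eq_of_card_mul_eq {G K : Type*} [AddCommGroup G] [Fintype G] [AddGroup K]
    [Fintype K] {φ : K →+ G} (hφ : Function.Injective φ) {S : Finset G}
    (hS : ∀ s ∈ S, ∀ s' ∈ S, s ≠ s' → ∀ k, k ≠ 0 → s - s' ≠ φ k)
    (hcard : #S * Fintype.card K = Fintype.card G) (g : G) : ∃ s ∈ S, ∃ k, s + φ k = g := by
  have hinj : Function.Injective fun x : S × K => x.1.1 + φ x.2 := by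
    rintro ⟨⟨s, hs⟩, k⟩ ⟨⟨s', hs'⟩, k'⟩ h
    have hsub : s - s' = φ (k' - k) := by
      rw [map_sub]
      exact sub_eq_sub_iff_add_eq_add.2 (h.trans (add_comm _ _))
    by_cases hss' : s = s'
    · subst hss'
      simp only [add_right_inj] at h
      rw [hφ h]
    · by_cases hkk' : k' - k = 0
      · rw [hkk', map_zero, sub_eq_zero] at hsub
        exact absurd hsub hss'
      · exact absurd hsub (hS s hs s' hs' hss' _ hkk')
  obtain ⟨⟨⟨s, hs⟩, k⟩, rfl⟩ := ((Fintype.bijective_iff_injective_and_card _).2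
    ⟨hinj, by simpa using hcard⟩).2 g
  exact ⟨s, hs, k, rfl⟩

lemma Nat.Prime.not_sq_dvd_mul {p q : ℕ} (hp : p.Prime) (hq : q.Prime) (hpq : p ≠ q) :
    ¬ p ^ 2 ∣ p * q := by
  rw [sq]
  exact fun h => hpq ((Nat.prime_dvd_prime_iff_eq hp hq).1 (Nat.dvd_of_mul_dvd_mul_left hp.pos h))

theorem case_pq_spectral_tile_general (p q : ℕ) [Fact p.Prime] [Fact q.Prime] (hpq : p ≠ q)
    (S Λ : Finset ((ZMod p × ZMod p) × ZMod q))
    (hpair : IsSpectrum p q S Λ)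
    (hcard : S.card = p * q) :
    (∀ v : ZMod q, (S.filter fun s => s.2 = v).card = p) ∧
    ∃ a : ZMod p × ZMod p, a ≠ 0 ∧
      (∀ s ∈ S, ∀ s' ∈ S, s ≠ s' → ∀ c : ZMod p, c ≠ 0 →
        s - s' ≠ ((c • a, (0 : ZMod q)) : (ZMod p × ZMod p) × ZMod q)) ∧
      (∀ g : (ZMod p × ZMod p) × ZMod q,
        ∃ s ∈ S, ∃ c : ZMod p, s + ((c • a, (0 : ZMod q)) : (ZMod p × ZMod p) × ZMod q) = g) := by
  have hdir : ¬ HasAllDirections p q S := fun h =>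
    Nat.Prime.not_sq_dvd_mul Fact.out Fact.out hpq (hcard ▸ hpair.sq_dvd_card h)
  have hfiber (v : ZMod q) : #{s ∈ S | s.2 = v} ≤ p :=
    not_lt.1 fun hv => hdir (hasAllDirections_of_lt_card_filter hv)
  refine ⟨Finset.card_filter_eq_of_card_filter_le S Prod.snd hfiber (by simp [hcard, mul_comm]), ?_⟩
  simp only [HasAllDirections, not_forall, not_exists, not_and] at hdir
  obtain ⟨a, ha, hsep⟩ := hdir
  let φ : ZMod p →+ (ZMod p × ZMod p) × ZMod q :=
    (AddMonoidHom.inl _ _).comp ((smulAddHom (ZMod p) (ZMod p × ZMod p)).flip a)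
  have hφ : Function.Injective φ := fun _ _ h =>
    smul_left_injective (ZMod p) ha (congrArg Prod.fst h)
  refine ⟨a, ha, hsep, exists_add_eq_of_card_mul_eq (φ := φ) hφ hsep ?_⟩
  simp [hcard, ZMod.card]
  ring

theorem case_pq_spectral_tile (p q : ℕ) [Fact p.Prime] [Fact q.Prime] (hpq : p ≠ q)
    (S Λ : Finset ((ZMod p × ZMod p) × ZMod q))
    (hpair : IsSpectrum p q S Λ)
    (hgcd : Nat.gcd (Fintype.card ((ZMod p × ZMod p) × ZMod q)) S.card = p * q)
    (hcard : S.card = p * q) :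
    (∀ v : ZMod q, (S.filter fun s => s.2 = v).card = p) ∧
    ∃ a : ZMod p × ZMod p, a ≠ 0 ∧
      (∀ s ∈ S, ∀ s' ∈ S, s ≠ s' → ∀ c : ZMod p, c ≠ 0 →
        s - s' ≠ ((c • a, (0 : ZMod q)) : (ZMod p × ZMod p) × ZMod q)) ∧
      (∀ g : (ZMod p × ZMod p) × ZMod q,
        ∃ s ∈ S, ∃ c : ZMod p, s + ((c • a, (0 : ZMod q)) : (ZMod p × ZMod p) × ZMod q) = g) :=
  case_pq_spectral_tile_general p q hpq S Λ hpair hcard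
end

section
/- Let G = Z_p^2 × Z_q and let S ⊆ G with p dividing |S|, |S| < pq, and suppose a character χ_{(a,b)} of order pq vanishes on S (a ∈ Z_p^2 nonzero, b ∈ Z_q nonzero). Then the projection S_{(a,b)} of S onto a Z_{pq} subgroup is a disjoint union of Z_p-cosets only (no Z_q-cosets occur), and hence each Z_p^2-coset i + Z_p^2 of G contains a_i · p elements of S for some nonnegative integers a_i. -/
open Complex Finset

/-!
Write `χ_{(a,b)}(x) = e_p(α x) e_q(x.2 b)` with `α x = ⟨x.1, a⟩`. Applying the Galois
automorphisms `ζ ↦ ζ^t` of `ℚ(ζ_{pq})` to the vanishing sum, with `t` chosen by the Chinese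
remainder theorem, shows that `∑_{x ∈ S} e_p(s α x) e_q(u x.2)` vanishes for all `s, u ≠ 0`: the
Fourier transform of the projection of `S` to `ℤ_p × ℤ_q` is supported on the two axes. Fourier
inversion turns this into `pq N(k,v) + |S| = p R(k) + q C(v)`, where `N(k,v)` counts the points
of `S` with `α x = k` and `x.2 = v`, and `R`, `C` are its marginals. Reducing modulo `q`, all
`R(k)` are congruent; as they sum to `|S|` with `p ∣ |S| < pq`, they are equal, and then
`N(k,v)` does not depend on `k`.
-/

theorem IsPrimitiveRoot.sum_pow_eq_zero_of_sum_pow_eq_zero {K ι : Type*} [Field K] [CharZero K]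
    {N : ℕ} (hN : 0 < N) {ζ ξ : K} (hζ : IsPrimitiveRoot ζ N) (hξ : IsPrimitiveRoot ξ N)
    (s : Finset ι) (f : ι → ℕ) (h : ∑ i ∈ s, ζ ^ f i = 0) : ∑ i ∈ s, ξ ^ f i = 0 := by
  have aeval_eq (μ : K) : Polynomial.aeval μ (∑ i ∈ s, Polynomial.X ^ f i : Polynomial ℚ) =
      ∑ i ∈ s, μ ^ f i := by simp
  rw [← aeval_eq, ← minpoly.dvd_iff, ← Polynomial.cyclotomic_eq_minpoly_rat hξ hN,
    Polynomial.cyclotomic_eq_minpoly_rat hζ hN, minpoly.dvd_iff, aeval_eq, h]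

namespace ZMod

theorem stdAddChar_natCast_eq_exp_pow {m n : ℕ} [NeZero m] (hn : n ≠ 0) (j : ℕ) :
    stdAddChar (j : ZMod m) = exp (2 * Real.pi * I / (m * n : ℕ)) ^ (n * j) := by
  have hmC : (m : ℂ) ≠ 0 := NeZero.ne _
  have hnC : (n : ℂ) ≠ 0 := Nat.cast_ne_zero.2 hn
  rw [stdAddChar_apply, toCircle_natCast, ← exp_nat_mul]
  congr 1
  push_cast
  field_simp

theorem exists_natCast_eq_and_coprime {m n : ℕ} [NeZero m] [NeZero n] (hmn : m.Coprime n)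
    {s : ZMod m} {u : ZMod n} (hs : IsUnit s) (hu : IsUnit u) :
    ∃ t : ℕ, (t : ZMod m) = s ∧ (t : ZMod n) = u ∧ t.Coprime (m * n) := by
  set t := (chineseRemainder hmn).symm (s, u)
  have ht : cast t = (s, u) := (chineseRemainder hmn).apply_symm_apply _
  rw [cast_eq_val] at ht
  refine ⟨t.val, by simpa using congrArg Prod.fst ht, by simpa using congrArg Prod.snd ht, ?_⟩
  rw [← isUnit_iff_coprime, natCast_zmod_val]
  exact (Prod.isUnit_iff.2 ⟨hs, hu⟩).map (chineseRemainder hmn).symm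

theorem sum_stdAddChar_mul_mul_eq_zero {ι : Type*} {m n : ℕ} [NeZero m] [NeZero n]
    (hmn : m.Coprime n) (S : Finset ι) (α : ι → ZMod m) (β : ι → ZMod n)
    (h : ∑ x ∈ S, stdAddChar (α x) * stdAddChar (β x) = 0)
    {s : ZMod m} {u : ZMod n} (hs : IsUnit s) (hu : IsUnit u) :
    ∑ x ∈ S, stdAddChar (s * α x) * stdAddChar (u * β x) = 0 := by
  obtain ⟨t, rfl, rfl, ht⟩ := exists_natCast_eq_and_coprime hmn hs hu
  set ζ := exp (2 * Real.pi * I / (m * n : ℕ))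
  have hζ : IsPrimitiveRoot ζ (m * n) := isPrimitiveRoot_exp _ (NeZero.ne _)
  have hterm (c : ℕ) (x : ι) : stdAddChar ((c : ZMod m) * α x) *
      stdAddChar ((c : ZMod n) * β x) = (ζ ^ c) ^ (n * (α x).val + m * (β x).val) := by
    have hα : (c : ZMod m) * α x = ((c * (α x).val : ℕ) : ZMod m) := by simp
    have hβ : (c : ZMod n) * β x = ((c * (β x).val : ℕ) : ZMod n) := by simp
    rw [hα, hβ, stdAddChar_natCast_eq_exp_pow (NeZero.ne n),
      stdAddChar_natCast_eq_exp_pow (m := n) (NeZero.ne m), mul_comm n m]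
    simp only [ζ]
    ring
  have hterm_one (x : ι) : stdAddChar (α x) * stdAddChar (β x) =
      ζ ^ (n * (α x).val + m * (β x).val) := by
    simpa using hterm 1 x
  simp only [hterm]
  simp only [hterm_one] at h
  exact hζ.sum_pow_eq_zero_of_sum_pow_eq_zero (NeZero.pos _) (hζ.pow_of_coprime t ht) S _ h

end ZMod

theorem Fintype.sum_sum_add_apply_zero_zero_eq {R T M : Type*} [Fintype R] [Fintype T]
    [DecidableEq R] [Zero R] [Zero T] [AddCommGroup M] (F : R → T → M)
    (hF : ∀ s ≠ 0, ∀ u ≠ 0, F s u = 0) :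
    ∑ s, ∑ u, F s u + F 0 0 = ∑ u, F 0 u + ∑ s, F s 0 := by
  have hrows : ∑ s ∈ univ.erase 0, ∑ u, F s u = ∑ s ∈ univ.erase 0, F s 0 :=
    Finset.sum_congr rfl fun s hs =>
      Fintype.sum_eq_single 0 fun u hu => hF s (ne_of_mem_erase hs) u hu
  rw [← add_sum_erase _ _ (mem_univ 0), ← add_sum_erase univ (fun s => F s 0) (mem_univ 0),
    hrows]
  abel

namespace AddChar

variable {ι R T R' : Type*} [CommRing R] [Fintype R] [DecidableEq R] [CommRing T] [Fintype T]
  [DecidableEq T] [CommRing R'] [IsDomain R'] {ψ : AddChar R R'} {φ : AddChar T R'}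

theorem sum_sum_mul_sub_eq_card_mul_card_filter (hψ : ψ.IsPrimitive) (S : Finset ι)
    (α : ι → R) (k : R) :
    ∑ x ∈ S, ∑ s, ψ (s * (α x - k)) = Fintype.card R * #{x ∈ S | α x = k} := by
  simp only [sum_mulShift _ hψ, sub_eq_zero, Nat.cast_ite, Nat.cast_zero, sum_ite, sum_const,
    nsmul_eq_mul, mul_comm, zero_mul, add_zero]

theorem card_mul_card_mul_card_filter_and_add_card [CharZero R'] (hψ : ψ.IsPrimitive)
    (hφ : φ.IsPrimitive) (S : Finset ι) (α : ι → R) (β : ι → T)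
    (h : ∀ s ≠ 0, ∀ u ≠ 0, ∑ x ∈ S, ψ (s * α x) * φ (u * β x) = 0) (k : R) (w : T) :
    Fintype.card R * Fintype.card T * #{x ∈ S | α x = k ∧ β x = w} + #S =
      Fintype.card R * #{x ∈ S | α x = k} + Fintype.card T * #{x ∈ S | β x = w} := by
  set F : R → T → R' := fun s u => ∑ x ∈ S, ψ (s * (α x - k)) * φ (u * (β x - w))
  have hF : ∀ s ≠ 0, ∀ u ≠ 0, F s u = 0 := by
    intro s hs u hu
    have hshift : F s u = ψ (-(s * k)) * φ (-(u * w)) * ∑ x ∈ S, ψ (s * α x) * φ (u * β x) := by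
      rw [mul_sum]
      refine Finset.sum_congr rfl fun x _ => ?_
      rw [mul_sub, mul_sub, sub_eq_neg_add, sub_eq_neg_add, map_add_eq_mul, map_add_eq_mul]
      ring
    rw [hshift, h s hs u hu, mul_zero]
  have hall : ∑ s, ∑ u, F s u =
      Fintype.card R * Fintype.card T * #{x ∈ S | α x = k ∧ β x = w} :=
    calc ∑ s, ∑ u, F s u
        = ∑ x ∈ S, (∑ s : R, ψ (s * (α x - k))) * ∑ u : T, φ (u * (β x - w)) := by
          simp only [F, sum_mul_sum]
          exact (Finset.sum_congr rfl fun _ _ => Finset.sum_comm).trans Finset.sum_comm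
      _ = _ := by
          simp only [sum_mulShift _ hψ, sum_mulShift _ hφ, sub_eq_zero, Nat.cast_ite,
            Nat.cast_zero, ite_zero_mul_ite_zero, sum_ite, sum_const, nsmul_eq_mul, smul_zero,
            add_zero]
          ring
  have hrow : ∑ s, F s 0 = Fintype.card R * #{x ∈ S | α x = k} := by
    simp only [F, zero_mul, map_zero_eq_one, mul_one]
    rw [Finset.sum_comm, sum_sum_mul_sub_eq_card_mul_card_filter hψ]
  have hcol : ∑ u, F 0 u = Fintype.card T * #{x ∈ S | β x = w} := by
    simp only [F, zero_mul, map_zero_eq_one, one_mul]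
    rw [Finset.sum_comm, sum_sum_mul_sub_eq_card_mul_card_filter hφ]
  have hzero : F 0 0 = #S := by simp [F]
  have key := Fintype.sum_sum_add_apply_zero_zero_eq F hF
  rw [hall, hrow, hcol, hzero] at key
  exact_mod_cast key.trans (add_comm _ _)

end AddChar

theorem Fintype.eq_of_forall_modEq_of_dvd_sum_of_sum_lt {K : Type*} [Fintype K] {q : ℕ}
    (hcop : (Fintype.card K).Coprime q) (R : K → ℕ) (hmod : ∀ k k', R k ≡ R k' [MOD q])
    (hdvd : Fintype.card K ∣ ∑ k, R k) (hlt : ∑ k, R k < Fintype.card K * q) (k k' : K) :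
    R k = R k' := by
  have : Nonempty K := ⟨k⟩
  obtain ⟨k₀, hk₀⟩ := Finite.exists_min R
  have hsum : ∑ j, R j = Fintype.card K * R k₀ + ∑ j, (R j - R k₀) := by
    rw [← smul_eq_mul, ← card_univ, ← sum_const, ← sum_add_distrib]
    exact Finset.sum_congr rfl fun j _ => (Nat.add_sub_cancel' (hk₀ j)).symm
  have hexcess : Fintype.card K * q ∣ ∑ j, (R j - R k₀) :=
    hcop.mul_dvd_of_dvd_of_dvd ((Nat.dvd_add_right (dvd_mul_right _ _)).1 (hsum ▸ hdvd))
      (dvd_sum fun j _ => (Nat.modEq_iff_dvd' (hk₀ j)).1 (hmod k₀ j))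
  have hzero : ∑ j, (R j - R k₀) = 0 := Nat.eq_zero_of_dvd_of_lt hexcess (by omega)
  have hmin (j : K) : R j = R k₀ := by
    have := sum_eq_zero_iff.1 hzero j (mem_univ _)
    have := hk₀ j
    omega
  rw [hmin k, hmin k']

theorem Fintype.eq_of_mul_mul_add_eq_mul_add_mul {K V : Type*} [Fintype K] {p q n : ℕ}
    (hK : Fintype.card K = p) (hcop : p.Coprime q) (N : V → K → ℕ) (C : V → ℕ) (R : K → ℕ)
    (hR : ∑ k, R k = n) (hdvd : p ∣ n) (hlt : n < p * q)
    (hid : ∀ v k, q * p * N v k + n = q * C v + p * R k) (v : V) (k k' : K) :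
    N v k = N v k' := by
  subst hK
  have hmodn (j : K) : Fintype.card K * R j ≡ n [MOD q] :=
    calc Fintype.card K * R j ≡ Fintype.card K * R j + q * C v [MOD q] :=
          (Nat.add_mul_mod_self_left _ _ _).symm
      _ = n + q * (Fintype.card K * N v j) := by rw [add_comm, ← hid v j]; ring
      _ ≡ n [MOD q] := Nat.add_mul_mod_self_left _ _ _
  have hRk : R k = R k' :=
    Fintype.eq_of_forall_modEq_of_dvd_sum_of_sum_lt hcop R
      (fun j j' => Nat.ModEq.cancel_left_of_coprime hcop.symm ((hmodn j).trans (hmodn j').symm))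
      (hR ▸ hdvd) (hR ▸ hlt) k k'
  have h := hid v k
  rw [hRk, ← hid v k'] at h
  exact Nat.eq_of_mul_eq_mul_left (by rw [mul_comm]; omega) (Nat.add_right_cancel h)

theorem chiG_eq_stdAddChar_mul_stdAddChar (p q : ℕ) [NeZero p] [NeZero q]
    (a : ZMod p × ZMod p) (b : ZMod q) (x : (ZMod p × ZMod p) × ZMod q) :
    chiG p q (a, b) x =
      ZMod.stdAddChar (x.1.1 * a.1 + x.1.2 * a.2) * ZMod.stdAddChar (x.2 * b) := by
  simp only [chiG, chiZp2, ZMod.stdAddChar_apply, ZMod.toCircle_apply, mul_div_assoc]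

theorem projection_union_of_Zp_cosets_general (p q : ℕ) [Fact p.Prime] [Fact q.Prime] (hpq : p ≠ q)
    (S : Finset ((ZMod p × ZMod p) × ZMod q))
    (hdvd : p ∣ S.card) (hlt : S.card < p * q)
    (a : ZMod p × ZMod p) (b : ZMod q) (hb : b ≠ 0)
    (hvanish : ∑ x ∈ S, chiG p q (a, b) x = 0) :
    ∀ v : ZMod q, ∃ c : ℕ,
      (∀ k : ZMod p,
        (S.filter fun x => x.2 = v ∧ x.1.1 * a.1 + x.1.2 * a.2 = k).card = c) ∧
      (S.filter fun x => x.2 = v).card = c * p := by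
  set α : (ZMod p × ZMod p) × ZMod q → ZMod p := fun x => x.1.1 * a.1 + x.1.2 * a.2
  have hcop : p.Coprime q := (Nat.coprime_primes Fact.out Fact.out).2 hpq
  have hvanish' : ∑ x ∈ S, ZMod.stdAddChar (x.2 * b) * ZMod.stdAddChar (α x) = 0 := by
    rw [← hvanish]
    exact Finset.sum_congr rfl fun x _ =>
      (mul_comm _ _).trans (chiG_eq_stdAddChar_mul_stdAddChar p q a b x).symm
  have htwist : ∀ u ≠ 0, ∀ s ≠ 0,
      ∑ x ∈ S, ZMod.stdAddChar (u * x.2) * ZMod.stdAddChar (s * α x) = 0 := by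
    intro u hu s hs
    have h := ZMod.sum_stdAddChar_mul_mul_eq_zero hcop.symm S (fun x => x.2 * b) α hvanish'
      (isUnit_iff_ne_zero.2 (mul_ne_zero hu (inv_ne_zero hb))) (isUnit_iff_ne_zero.2 hs)
    have hunb (y : ZMod q) : u * b⁻¹ * (y * b) = u * y := by field_simp
    simpa only [hunb] using h
  have hcount := AddChar.card_mul_card_mul_card_filter_and_add_card
    (ZMod.isPrimitive_stdAddChar q) (ZMod.isPrimitive_stdAddChar p) S Prod.snd α htwist
  simp only [ZMod.card] at hcount
  have hconst := Fintype.eq_of_mul_mul_add_eq_mul_add_mul (ZMod.card p) hcop _ _ _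
    (card_eq_sum_card_fiberwise fun _ _ => mem_univ _).symm hdvd hlt hcount
  intro v
  refine ⟨#{x ∈ S | x.2 = v ∧ α x = 0}, fun k => hconst v k 0, ?_⟩
  rw [card_eq_sum_card_fiberwise (f := α) (t := univ) fun _ _ => mem_univ _]
  simp only [filter_filter, fun k => hconst v k 0, sum_const, card_univ, ZMod.card,
    smul_eq_mul, mul_comm]

theorem projection_union_of_Zp_cosets (p q : ℕ) [Fact p.Prime] [Fact q.Prime] (hpq : p ≠ q)
    (S : Finset ((ZMod p × ZMod p) × ZMod q))
    (hdvd : p ∣ S.card) (hlt : S.card < p * q)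
    (a : ZMod p × ZMod p) (ha : a ≠ 0) (b : ZMod q) (hb : b ≠ 0)
    (hvanish : ∑ x ∈ S, chiG p q (a, b) x = 0) :
    ∀ v : ZMod q, ∃ c : ℕ,
      (∀ k : ZMod p,
        (S.filter fun x => x.2 = v ∧ x.1.1 * a.1 + x.1.2 * a.2 = k).card = c) ∧
      (S.filter fun x => x.2 = v).card = c * p :=
  projection_union_of_Zp_cosets_general p q hpq S hdvd hlt a b hb hvanish
end

section
/- Let G = Z_p^2 × Z_q and suppose A ⊆ G with |A| = p, 0 ∈ A, and some character χ_{(c,d)} of order pq vanishes on A. Then all elements of A have Z_q-coordinate 0, i.e., A ⊆ Z_p^2 × {0}. -/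
open Complex Finset

/-!
Write `χ(x) = ω ^ e(x)` with `ω` a primitive `pq`-th root of unity, where `e(x) ≡ p d x₂ (mod q)`.
The vanishing of `∑ χ` means `Φ_{pq}` divides `∑_{x ∈ A} X ^ e(x)` in `ℤ[X]`; since
`Φ_{pq} ≡ Φ_q ^ (p - 1) (mod p)`, already `Φ_q` divides it over `𝔽_p`. Evaluating at the generator
of the group algebra `𝔽_p[ℤ/q]` sends `Φ_q` to the sum of all group elements, which absorbs
everything it multiplies into a constant function; hence the fibres of `x ↦ e(x) mod q` on `A`
all have the same size mod `p`. As they add up to `|A| = p` and `q` is invertible mod `p`,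
one fibre is all of `A`: the fibre of `0 ∈ A`, where `e = 0`.
-/

open Polynomial AddMonoidAlgebra

theorem Complex.exp_two_pi_I_div_mul_exp_two_pi_I_div {p q : ℕ} (hp : p ≠ 0) (hq : q ≠ 0)
    (a b : ℕ) :
    exp (2 * Real.pi * I * (a / p)) * exp (2 * Real.pi * I * (b / q)) =
      exp (2 * Real.pi * I / (p * q : ℕ)) ^ (a * q + b * p) := by
  rw [← exp_add, ← exp_nat_mul]
  congr 1
  have hp' : (p : ℂ) ≠ 0 := Nat.cast_ne_zero.mpr hp
  have hq' : (q : ℂ) ≠ 0 := Nat.cast_ne_zero.mpr hq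
  push_cast
  field_simp

theorem Polynomial.cyclotomic_dvd_of_aeval_eq_zero {K : Type*} [Field K] [CharZero K] {n : ℕ}
    (hn : 0 < n) {ζ : K} (hζ : IsPrimitiveRoot ζ n) {P : ℤ[X]} (hP : aeval ζ P = 0) :
    cyclotomic n ℤ ∣ P := by
  rw [cyclotomic_eq_minpoly hζ hn]
  exact minpoly.isIntegrallyClosed_dvd (hζ.isIntegral hn) hP

theorem Polynomial.cyclotomic_dvd_map_of_cyclotomic_mul_prime_dvd {R : Type*} [CommRing R]
    {p n : ℕ} [Fact p.Prime] [CharP R p] (hn : ¬p ∣ n) {P : ℤ[X]}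
    (hP : cyclotomic (n * p) ℤ ∣ P) : cyclotomic n R ∣ P.map (Int.castRingHom R) := by
  have hmap := Polynomial.map_dvd (Int.castRingHom R) hP
  rw [map_cyclotomic_int, cyclotomic_mul_prime_eq_pow_of_not_dvd R hn] at hmap
  exact (dvd_pow_self _ (Nat.sub_ne_zero_of_lt (Fact.out : p.Prime).one_lt)).trans hmap

section GroupAlgebra

variable {R : Type*} [CommSemiring R]

theorem AddMonoidAlgebra.coeff_sum_single_one_mul {G : Type*} [AddGroup G] [Fintype G]
    (y : AddMonoidAlgebra R G) (g : G) :
    ((∑ j : G, single j (1 : R)) * y).coeff g = ∑ a : G, y.coeff a := by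
  rw [Finset.sum_mul, coeff_sum, Finset.sum_apply']
  simp only [coeff_single_mul_apply, one_mul]
  exact Fintype.sum_equiv ((Equiv.neg G).trans (Equiv.addRight g)) _ _ fun _ => rfl

variable {n : ℕ}

theorem AddMonoidAlgebra.single_one_one_pow (k : ℕ) :
    single (1 : ZMod n) (1 : R) ^ k = single (k : ZMod n) 1 := by
  rw [single_pow, one_pow, nsmul_one]

theorem AddMonoidAlgebra.aeval_single_one_one_sum_X_pow {ι : Type*} (A : Finset ι) (f : ι → ℕ) :
    aeval (single (1 : ZMod n) (1 : R)) (∑ i ∈ A, (X : R[X]) ^ f i) =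
      ∑ i ∈ A, single (f i : ZMod n) 1 := by
  simp only [map_sum, map_pow, aeval_X, single_one_one_pow]

theorem AddMonoidAlgebra.aeval_single_one_one_geom_sum [NeZero n] :
    aeval (single (1 : ZMod n) (1 : R)) (∑ i ∈ range n, (X : R[X]) ^ i) =
      ∑ j : ZMod n, single j 1 := by
  rw [aeval_single_one_one_sum_X_pow]
  exact Finset.sum_nbij' (fun i => (i : ZMod n)) ZMod.val (fun _ _ => mem_univ _)
    (fun j _ => mem_range.2 (ZMod.val_lt j)) (fun i hi => ZMod.val_cast_of_lt (mem_range.1 hi))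
    (fun j _ => ZMod.natCast_zmod_val j) fun _ _ => rfl

theorem AddMonoidAlgebra.coeff_sum_single_one {ι M : Type*} [DecidableEq M] (A : Finset ι)
    (f : ι → M) (r : M) :
    (∑ i ∈ A, single (f i) (1 : R)).coeff r = #{i ∈ A | f i = r} := by
  rw [coeff_sum, Finset.sum_apply']
  simp only [coeff_single, Finsupp.single_apply]
  rw [Finset.sum_boole]

end GroupAlgebra

theorem Polynomial.natCast_card_filter_eq_of_cyclotomic_prime_dvd {R : Type*} [CommRing R]
    {q : ℕ} [Fact q.Prime] {ι : Type*} (A : Finset ι) (f : ι → ℕ)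
    (h : cyclotomic q R ∣ ∑ i ∈ A, X ^ f i) (r r' : ZMod q) :
    (#{i ∈ A | (f i : ZMod q) = r} : R) = #{i ∈ A | (f i : ZMod q) = r'} := by
  obtain ⟨Q, hQ⟩ := h
  have hσ := congrArg (aeval (single (1 : ZMod q) (1 : R))) hQ
  rw [map_mul, cyclotomic_prime, aeval_single_one_one_geom_sum,
    aeval_single_one_one_sum_X_pow] at hσ
  rw [← coeff_sum_single_one, ← coeff_sum_single_one, hσ, coeff_sum_single_one_mul,
    coeff_sum_single_one_mul]

theorem Finset.forall_eq_of_card_eq_prime_of_natCast_card_fiber_eq {ι β : Type*} [Fintype β]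
    [DecidableEq β] {p : ℕ} [Fact p.Prime] (hβ : ¬p ∣ Fintype.card β) {A : Finset ι}
    (hA : #A = p) (f : ι → β)
    (hf : ∀ b b', (#{i ∈ A | f i = b} : ZMod p) = #{i ∈ A | f i = b'})
    {i₀ : ι} (hi₀ : i₀ ∈ A) : ∀ i ∈ A, f i = f i₀ := by
  set N := #{i ∈ A | f i = f i₀}
  have hsum : (Fintype.card β : ZMod p) * N = 0 := by
    have := congrArg (Nat.cast : ℕ → ZMod p) (card_eq_sum_card_fiberwise (s := A) (t := univ)
      (f := f) fun _ _ => mem_univ _)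
    rw [hA, ZMod.natCast_self, Nat.cast_sum, Finset.sum_congr rfl fun b _ => hf b (f i₀),
      sum_const, card_univ, nsmul_eq_mul] at this
    exact this.symm
  have hpN : p ∣ N := by
    rw [← ZMod.natCast_eq_zero_iff]
    exact (mul_eq_zero.1 hsum).resolve_left fun h => hβ ((ZMod.natCast_eq_zero_iff _ _).1 h)
  have hN : N = #A := by
    refine le_antisymm (card_filter_le _ _) ?_
    rw [hA]
    exact Nat.le_of_dvd (card_pos.2 ⟨i₀, mem_filter.2 ⟨hi₀, rfl⟩⟩) hpN
  intro i hi
  rw [← eq_of_subset_of_card_le (filter_subset _ A) hN.ge] at hi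
  exact (mem_filter.1 hi).2

theorem chiG_eq_pow {p q : ℕ} (hp : p ≠ 0) (hq : q ≠ 0) (l x : (ZMod p × ZMod p) × ZMod q) :
    chiG p q l x = exp (2 * Real.pi * I / (p * q : ℕ)) ^
      ((x.1.1 * l.1.1 + x.1.2 * l.1.2 : ZMod p).val * q + (x.2 * l.2 : ZMod q).val * p) :=
  exp_two_pi_I_div_mul_exp_two_pi_I_div hp hq _ _

theorem order_pq_vanishing_forces_q_coordinate_zero_general (p q : ℕ) [Fact p.Prime] [Fact q.Prime]
    (hpq : p ≠ q) (A : Finset ((ZMod p × ZMod p) × ZMod q))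
    (hA : A.card = p) (h0 : ((0, 0) : (ZMod p × ZMod p) × ZMod q) ∈ A)
    (c : ZMod p × ZMod p) (d : ZMod q) (hd : d ≠ 0)
    (hvanish : ∑ x ∈ A, chiG p q (c, d) x = 0) :
    ∀ x ∈ A, x.2 = 0 := by
  have hp : p.Prime := Fact.out
  have hq : q.Prime := Fact.out
  have hqp_pos : 0 < q * p := Nat.mul_pos hq.pos hp.pos
  set e : (ZMod p × ZMod p) × ZMod q → ℕ := fun x =>
    (x.1.1 * c.1 + x.1.2 * c.2 : ZMod p).val * q + (x.2 * d : ZMod q).val * p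
  have hroot : aeval (exp (2 * Real.pi * I / (p * q : ℕ))) (∑ x ∈ A, (X : ℤ[X]) ^ e x) = 0 := by
    simpa [chiG_eq_pow hp.ne_zero hq.ne_zero] using hvanish
  have hcyc : cyclotomic (q * p) ℤ ∣ ∑ x ∈ A, (X : ℤ[X]) ^ e x :=
    cyclotomic_dvd_of_aeval_eq_zero hqp_pos
      (mul_comm p q ▸ isPrimitiveRoot_exp _ (mul_comm q p ▸ hqp_pos.ne')) hroot
  have hcyc_mod_p : cyclotomic q (ZMod p) ∣ ∑ x ∈ A, (X : (ZMod p)[X]) ^ e x := by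
    simpa only [Polynomial.map_sum, Polynomial.map_pow, Polynomial.map_X] using
      cyclotomic_dvd_map_of_cyclotomic_mul_prime_dvd (R := ZMod p)
        (fun h => hpq ((Nat.prime_dvd_prime_iff_eq hp hq).1 h)) hcyc
  have hfibre : ∀ x ∈ A, (e x : ZMod q) = e (0, 0) :=
    forall_eq_of_card_eq_prime_of_natCast_card_fiber_eq
    (by rwa [ZMod.card, Nat.prime_dvd_prime_iff_eq hp hq]) hA _
    (natCast_card_filter_eq_of_cyclotomic_prime_dvd A e hcyc_mod_p) h0
  have hp_ne_zero : (p : ZMod q) ≠ 0 := by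
    rw [Ne, ZMod.natCast_eq_zero_iff, Nat.prime_dvd_prime_iff_eq hq hp]
    exact hpq.symm
  have he : ∀ x, (e x : ZMod q) = x.2 * d * p := fun x => by simp [e]
  intro x hx
  have hx0 := hfibre x hx
  rw [he, he] at hx0
  simpa [hd, hp_ne_zero] using hx0

theorem order_pq_vanishing_forces_q_coordinate_zero (p q : ℕ) [Fact p.Prime] [Fact q.Prime]
    (hpq : p ≠ q) (A : Finset ((ZMod p × ZMod p) × ZMod q))
    (hA : A.card = p) (h0 : ((0, 0) : (ZMod p × ZMod p) × ZMod q) ∈ A)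
    (c : ZMod p × ZMod p) (hc : c ≠ 0) (d : ZMod q) (hd : d ≠ 0)
    (hvanish : ∑ x ∈ A, chiG p q (c, d) x = 0) :
    ∀ x ∈ A, x.2 = 0 :=
  order_pq_vanishing_forces_q_coordinate_zero_general p q hpq A hA h0 c d hd hvanish
end

section
/- Let p be a prime, A ⊆ Z_p^2 with |A| = p, and suppose there exist two distinct elements of A whose difference is a ∈ Z_p^2 (a ≠ 0). Let a' ∈ Z_p^2 be nonzero with ⟨a, a'⟩ = 0. Then the character sum χ_{a'}(A) = ∑_{u∈A} e^{2πi⟨u,a'⟩/p} is nonzero. -/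
open Complex Finset

/-!
With `ζ = exp (2πi/p)` we have `chiZp2 p a' u = ζ ^ ⟨u, a'⟩`, so a vanishing character sum says that
`∑_{k < p} c_k X^k` vanishes at `ζ`, where `c_k` counts the `u ∈ A` with `⟨u, a'⟩ = k`. This polynomial
of degree `< p` is then a multiple of the minimal polynomial `1 + X + ⋯ + X^(p-1)` of `ζ`, so all `c_k`
are equal, hence all equal to `1` as `|A| = p`. But the two elements of `A` differing by `a ⊥ a'` have
the same value of `⟨·, a'⟩`.
-/

open Polynomial

theorem Polynomial.coeff_sum_range_C_mul_X_pow {R : Type*} [Semiring R] (c : ℕ → R) {n i : ℕ}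
    (hi : i < n) : (∑ k ∈ range n, C (c k) * X ^ k).coeff i = c i := by
  simp [finsetSum_coeff, hi]

theorem IsPrimitiveRoot.coeff_eq_of_sum_mul_pow_eq_zero {K : Type*} [Field K] [CharZero K]
    {p : ℕ} [hp : Fact p.Prime] {ζ : K} (hζ : IsPrimitiveRoot ζ p) {c : ℕ → ℚ}
    (h : ∑ k ∈ range p, (c k : K) * ζ ^ k = 0) {i j : ℕ} (hi : i < p) (hj : j < p) :
    c i = c j := by
  set P : ℚ[X] := ∑ k ∈ range p, C (c k) * X ^ k
  have hdvd : cyclotomic p ℚ ∣ P := by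
    rw [cyclotomic_eq_minpoly_rat hζ hp.out.pos]
    exact minpoly.dvd ℚ ζ (by simpa [P] using h)
  have hdeg : P.natDegree ≤ (cyclotomic p ℚ).natDegree := by
    rw [natDegree_cyclotomic, Nat.totient_prime hp.out]
    refine natDegree_sum_le_of_forall_le _ _ fun k hk => (natDegree_C_mul_X_pow_le _ _).trans ?_
    have := mem_range.mp hk
    omega
  have hP := eq_leadingCoeff_mul_of_monic_of_dvd_of_natDegree_le (cyclotomic.monic p ℚ) hdvd hdeg
  have hcoeff : ∀ k < p, c k = P.leadingCoeff := fun k hk => by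
    have := congrArg (coeff · k) hP
    simpa [P, coeff_sum_range_C_mul_X_pow c hk, cyclotomic_prime, finsetSum_coeff, coeff_X_pow, hk]
      using this
  rw [hcoeff i hi, hcoeff j hj]

theorem IsPrimitiveRoot.injOn_of_sum_pow_eq_zero {K : Type*} [Field K] [CharZero K]
    {p : ℕ} [hp : Fact p.Prime] {ζ : K} (hζ : IsPrimitiveRoot ζ p) {ι : Type*} {A : Finset ι}
    (hA : #A = p) {f : ι → ℕ} (hf : ∀ u ∈ A, f u < p) (h : ∑ u ∈ A, ζ ^ f u = 0) :
    Set.InjOn f A := by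
  classical
  have hmaps : ∀ u ∈ A, f u ∈ range p := fun u hu => mem_range.mpr (hf u hu)
  set c : ℕ → ℕ := fun k => #{u ∈ A | f u = k}
  have hfiber : ∑ k ∈ range p, ((c k : ℚ) : K) * ζ ^ k = 0 := by
    rw [← h, ← sum_fiberwise_of_maps_to hmaps]
    refine sum_congr rfl fun k _ => ?_
    rw [sum_congr rfl fun u hu => by rw [(mem_filter.mp hu).2]]
    simp [c]
  intro u hu v hv huv
  by_contra hne
  have htwo : 2 ≤ c (f u) :=
    one_lt_card.mpr ⟨u, mem_filter.mpr ⟨hu, rfl⟩, v, mem_filter.mpr ⟨hv, huv.symm⟩, hne⟩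
  have hall : ∀ k ∈ range p, 2 ≤ c k := fun k hk => by
    have := hζ.coeff_eq_of_sum_mul_pow_eq_zero hfiber (hf u hu) (mem_range.mp hk)
    have : c (f u) = c k := by exact_mod_cast this
    omega
  have hcount : 2 * p ≤ #A := calc
    2 * p = ∑ _k ∈ range p, 2 := by simp [mul_comm]
    _ ≤ ∑ k ∈ range p, c k := sum_le_sum hall
    _ = #A := (card_eq_sum_card_fiberwise hmaps).symm
  have := hp.out.pos
  omega

theorem chiZp2_eq_pow (p : ℕ) (a u : ZMod p × ZMod p) :
    chiZp2 p a u = exp (2 * Real.pi * I / p) ^ (u.1 * a.1 + u.2 * a.2 : ZMod p).val := by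
  rw [chiZp2, ← Complex.exp_nat_mul]
  ring_nf

theorem orthogonal_direction_char_nonvanishing_general (p : ℕ) [Fact p.Prime]
    (A : Finset (ZMod p × ZMod p)) (hA : A.card = p)
    (a a' : ZMod p × ZMod p)
    (horth : a.1 * a'.1 + a.2 * a'.2 = 0)
    (hdiff : ∃ s ∈ A, ∃ s' ∈ A, s ≠ s' ∧ s - s' = a) :
    ∑ u ∈ A, chiZp2 p a' u ≠ 0 := by
  obtain ⟨s, hs, s', hs', hne, rfl⟩ := hdiff
  intro hzero
  simp_rw [chiZp2_eq_pow] at hzero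
  have hζ := Complex.isPrimitiveRoot_exp p (NeZero.ne p)
  refine hne (hζ.injOn_of_sum_pow_eq_zero hA (fun u _ => ZMod.val_lt _) hzero hs hs' ?_)
  simp only [Prod.fst_sub, Prod.snd_sub] at horth
  exact congrArg ZMod.val (by linear_combination horth)

theorem orthogonal_direction_char_nonvanishing (p : ℕ) [Fact p.Prime]
    (A : Finset (ZMod p × ZMod p)) (hA : A.card = p)
    (a a' : ZMod p × ZMod p) (ha : a ≠ 0) (ha' : a' ≠ 0)
    (horth : a.1 * a'.1 + a.2 * a'.2 = 0)
    (hdiff : ∃ s ∈ A, ∃ s' ∈ A, s ≠ s' ∧ s - s' = a) :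
    ∑ u ∈ A, chiZp2 p a' u ≠ 0 :=
  orthogonal_direction_char_nonvanishing_general p A hA a a' horth hdiff
end
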